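/- Let a ∈ ℝ with 0 ≤ a < 1. Then the restriction map H₁: 𝓑([−a/2, a/2]) → [−1, 1]^ℤ defined by H₁(f) = (f(n))_{n∈ℤ} is continuous, injective, and satisfies H₁ ∘ σ = σ ∘ H₁, where the first σ is the shift f ↦ f(·+1) on 𝓑([−a/2, a/2]) and the second σ is the shift (x_n)_{n∈ℤ} ↦ (x_{n+1})_{n∈ℤ} on [−1,1]^ℤ; consequently H₁ is an equivariant topological embedding of (𝓑([−a/2, a/2]), σ) into the full shift ([−1,1]^ℤ, σ). -/

import Mathlib

/-!
If `f` is bounded, continuous, vanishes on `ℤ` and has spectrum in a compact `I ⊆ (-1/2, 1/2)`,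
then for a Schwartz `g` supported in `(-1/2, 1/2)` the Fourier transform of `f · 𝓕 g` at a
nonzero integer `m` is the pairing of `f` with `𝓕` of the translate `g (· - m)`, whose support
misses `I`. Poisson summation then gives `∫ f · 𝓕 g = ∑ₙ f n · 𝓕 g n = 0`, so the spectrum of `f`
also lies in `{|ξ| ≥ 1/2}`. A smooth cutoff separating these two disjoint closed sets shows that
the spectrum is empty, hence `f = 0`. Applied to the difference of two elements of
`𝓑([-a/2, a/2])` this is the injectivity of `H₁`; continuity and equivariance are immediate.
-/

open MeasureTheory Set
open scoped ENNReal NNReal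

noncomputable section

/-- A bounded continuous function `f : ℝ → ℂ` is band-limited in `I` if its distributional
Fourier transform is supported in `I`, i.e. `⟨𝓕 f, g⟩ = ⟨f, 𝓕 g⟩ = 0` for every Schwartz
function `g` whose support is disjoint from `I`. -/
def BandLimitedIn (I : Set ℝ) (f : ℝ → ℂ) : Prop :=
  ∀ g : SchwartzMap ℝ ℂ, Disjoint (tsupport ⇑g) I →
    ∫ t : ℝ, f t * (FourierTransform.fourier (⇑g : ℝ → ℂ) : ℝ → ℂ) t = 0

/-- The Bernstein space `𝓑^ℂ(I)`. -/
def BernsteinC (I : Set ℝ) : Set C(ℝ, ℂ) :=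
  {f | (∀ t : ℝ, ‖f t‖ ≤ 1) ∧ BandLimitedIn I ⇑f}

/-- The real Bernstein space `𝓑(I)`. -/
def BernsteinR (I : Set ℝ) : Set C(ℝ, ℝ) :=
  {f | (∀ t : ℝ, |f t| ≤ 1) ∧ BandLimitedIn I (fun t => (f t : ℂ))}

/-- The shift `σ : g ↦ g(· + 1)`. -/
def shiftC : C(ℝ, ℂ) → C(ℝ, ℂ) := fun f => f.comp ⟨fun t => t + 1, by continuity⟩

def shiftR : C(ℝ, ℝ) → C(ℝ, ℝ) := fun f => f.comp ⟨fun t => t + 1, by continuity⟩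

/-- The metric `D(f,g) = Σ 2^{-n} ‖f-g‖_{L^∞([-n,n])}`. -/
def Dc (f g : C(ℝ, ℂ)) : ℝ :=
  ∑' n : ℕ, (1 / 2 : ℝ) ^ (n + 1) * ⨆ t : Icc (-(n + 1 : ℝ)) (n + 1 : ℝ), ‖f t.1 - g t.1‖

def Dr (f g : C(ℝ, ℝ)) : ℝ :=
  ∑' n : ℕ, (1 / 2 : ℝ) ^ (n + 1) * ⨆ t : Icc (-(n + 1 : ℝ)) (n + 1 : ℝ), |f t.1 - g t.1|

/-- Lebesgue covering dimension is at most `n`: every open cover admits an open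
refinement that still covers, of order at most `n + 1`. -/
def HasCovDimLE (X : Type*) [TopologicalSpace X] (n : ℕ) : Prop :=
  ∀ 𝒰 : Set (Set X), (∀ U ∈ 𝒰, IsOpen U) → ⋃₀ 𝒰 = Set.univ →
    ∃ 𝒱 : Set (Set X), (∀ V ∈ 𝒱, IsOpen V) ∧ ⋃₀ 𝒱 = Set.univ ∧
      (∀ V ∈ 𝒱, ∃ U ∈ 𝒰, V ⊆ U) ∧
      ∀ x : X, {V | V ∈ 𝒱 ∧ x ∈ V}.encard ≤ (n : ℕ∞) + 1

/-- Lebesgue covering dimension, valued in `ℕ∞`. -/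
def covDim (X : Type*) [TopologicalSpace X] : ℕ∞ :=
  ⨅ n ∈ {n : ℕ | HasCovDimLE X n}, (n : ℕ∞)

/-- `Widim_ε(X, d)`: the minimal covering dimension of a compact metrizable space `P`
admitting a continuous `ε`-embedding `f : X → P` with respect to `d`. -/
def Widim (X : Type u) [TopologicalSpace X] (d : X → X → ℝ) (ε : ℝ) : ℕ∞ :=
  sInf {k : ℕ∞ | ∃ (P : Type u) (tP : TopologicalSpace P),
    @CompactSpace P tP ∧ @TopologicalSpace.MetrizableSpace P tP ∧
    ∃ f : X → P, @Continuous X P _ tP f ∧ (∀ x y : X, f x = f y → d x y < ε) ∧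
      @covDim P tP = k}

/-- The dynamical metric `d_n(x,y) = max_{0 ≤ i ≤ n-1} d(T^i x, T^i y)`. -/
def dynDist {X : Type*} (T : X → X) (d : X → X → ℝ) (n : ℕ) (x y : X) : ℝ :=
  ⨆ i : Fin n, d (T^[(i : ℕ)] x) (T^[(i : ℕ)] y)

/-- Mean dimension `mdim(X,T) = lim_{ε→0} lim_{n→∞} Widim_ε(X, d_n)/n`; since
`Widim_ε(X, d_n)` is subadditive in `n` and monotone in `ε`, the iterated limit equals
`sup_{ε>0} inf_{n≥1} Widim_ε(X, d_n)/n`. -/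
def mdim {X : Type u} [TopologicalSpace X] (T : X → X) (d : X → X → ℝ) : ℝ≥0∞ :=
  ⨆ ε : {ε : ℝ // 0 < ε}, ⨅ n : ℕ+, (Widim X (dynDist T d n) ε.1 : ℝ≥0∞) / ((n : ℕ) : ℝ≥0∞)

/-- A system `(X, T)` is minimal if `X` has no nonempty proper closed `T`-invariant subset. -/
def IsMinimalSystem {X : Type*} [TopologicalSpace X] (T : X → X) : Prop :=
  ∀ Z : Set X, IsClosed Z → Z.Nonempty → T '' Z = Z → Z = Set.univ


/-- The full shift on `ℤ`-indexed sequences. -/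
def fullShift {α : Type*} : (ℤ → α) → (ℤ → α) := fun x n => x (n + 1)

/-- The restriction map `H₁(f) = (f(n))_{n∈ℤ}`. -/
def restrictToZ : C(ℝ, ℝ) → (ℤ → ℝ) := fun f n => f (n : ℝ)

open Filter Asymptotics SchwartzMap Topology
open scoped FourierTransform ContDiff

theorem Real.integral_eq_tsum_int_of_fourier_int_eq_zero {F : ℝ → ℂ} (hc : Continuous F)
    {b : ℝ} (hb : 1 < b) (hF : F =O[cocompact ℝ] (|·| ^ (-b)))
    (hFF : ∀ m : ℤ, m ≠ 0 → 𝓕 F m = 0) : ∫ t, F t = ∑' n : ℤ, F n := by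
  have hsum : Summable fun m : ℤ => 𝓕 F m :=
    summable_of_ne_finset_zero (s := {0}) fun m hm => hFF m (by simpa using hm)
  have hpoisson := Real.tsum_eq_tsum_fourier_of_rpow_decay_of_summable hc hb hF hsum 0
  simp only [zero_add] at hpoisson
  rw [hpoisson, tsum_eq_single 0 fun m hm => by rw [hFF m hm, zero_mul]]
  simp [Real.fourier_real_eq]

open Metric Manifold in
theorem exists_contDiff_hasCompactSupport_eventually_one {E : Type*} [NormedAddCommGroup E]
    [NormedSpace ℝ E] [FiniteDimensional ℝ E] {I J : Set E} (hI : IsCompact I)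
    (hJ : IsClosed J) (hIJ : Disjoint I J) :
    ∃ χ : E → ℝ, ContDiff ℝ ∞ χ ∧ HasCompactSupport χ ∧ Disjoint (tsupport χ) J ∧
      ∀ᶠ x in 𝓝ˢ I, χ x = 1 := by
  obtain ⟨δ, hδ, hδJ⟩ := hI.exists_cthickening_subset_open hJ.isOpen_compl
    (subset_compl_iff_disjoint_right.mpr hIJ)
  obtain ⟨χ, hχI, hχ0, -⟩ := exists_contMDiffMap_one_nhds_of_subset_interior 𝓘(ℝ, E)
    (n := ⊤) hI.isClosed
    ((self_subset_thickening hδ I).trans (thickening_subset_interior_cthickening δ I))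
  have hsupp : tsupport χ ⊆ cthickening δ I :=
    closure_minimal (fun x hx => by_contra fun h => hx (hχ0 x h)) isClosed_cthickening
  exact ⟨χ, χ.contMDiff.contDiff, HasCompactSupport.intro (hI.cthickening (r := δ)) hχ0,
    subset_compl_iff_disjoint_right.mp (hsupp.trans hδJ), hχI⟩

namespace SchwartzMap

theorem fourier_compSubConstCLM (g : 𝓢(ℝ, ℂ)) (a t : ℝ) :
    𝓕 (g.compSubConstCLM ℝ a : ℝ → ℂ) t = 𝐞 (-(a * t)) • 𝓕 (g : ℝ → ℂ) t := by
  have := congrFun (Fourier.fourierIntegral_comp_add_right 𝐞 volume (g : ℝ → ℂ) (-a)) t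
  simpa [Function.comp_def, Real.fourier_real_eq, Fourier.fourierIntegral_def, sub_eq_add_neg]
    using this

theorem tsupport_compSubConstCLM (g : 𝓢(ℝ, ℂ)) (a : ℝ) :
    tsupport (g.compSubConstCLM ℝ a) = (· - a) ⁻¹' tsupport g :=
  tsupport_comp_eq_preimage g (Homeomorph.subRight a)

theorem bounded_mul_isBigO_cocompact_rpow {f : ℝ → ℂ} {M : ℝ} (hb : ∀ t, ‖f t‖ ≤ M)
    (g : 𝓢(ℝ, ℂ)) (s : ℝ) : (fun t => f t * g t) =O[cocompact ℝ] (|·| ^ s) := by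
  have hf : f =O[cocompact ℝ] (fun _ => (1 : ℝ)) := isBigO_of_le' _ fun t => by simpa using hb t
  simpa using hf.mul (g.isBigO_cocompact_rpow s)

end SchwartzMap

theorem fourier_mul_fourier_eq_integral_compSubConstCLM (f : ℝ → ℂ) (g : 𝓢(ℝ, ℂ)) (a : ℝ) :
    𝓕 (fun t => f t * 𝓕 (g : ℝ → ℂ) t) a =
      ∫ t, f t * 𝓕 (g.compSubConstCLM ℝ a : ℝ → ℂ) t := by
  simp only [Real.fourier_real_eq, g.fourier_compSubConstCLM, Circle.smul_def, smul_eq_mul]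
  congr 1 with t
  ring_nf

namespace BandLimitedIn

variable {I J : Set ℝ} {f g : ℝ → ℂ} {M N : ℝ}

theorem sub (hfm : AEStronglyMeasurable f) (hfb : ∀ t, ‖f t‖ ≤ M)
    (hgm : AEStronglyMeasurable g) (hgb : ∀ t, ‖g t‖ ≤ N)
    (hf : BandLimitedIn I f) (hg : BandLimitedIn I g) : BandLimitedIn I (f - g) := by
  intro ψ hψ
  simp only [Pi.sub_apply, sub_mul]
  rw [integral_sub ((𝓕 ψ).integrable.bdd_mul hfm (ae_of_all _ hfb))
    ((𝓕 ψ).integrable.bdd_mul hgm (ae_of_all _ hgb)), hf ψ hψ, hg ψ hψ, sub_zero]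

theorem of_forall_int_eq_zero (hc : Continuous f) (hb : ∀ t, ‖f t‖ ≤ M)
    (hI : I ⊆ Icc (-(1 / 2)) (1 / 2)) (hf : BandLimitedIn I f) (hz : ∀ n : ℤ, f n = 0) :
    BandLimitedIn {x | 1 / 2 ≤ |x|} f := by
  intro ψ hψ
  have hsmall : ∀ x ∈ tsupport ψ, |x| < 1 / 2 := fun x hx =>
    not_le.mp fun h => disjoint_left.mp hψ hx h
  rw [Real.integral_eq_tsum_int_of_fourier_int_eq_zero (F := fun t => f t * 𝓕 (ψ : ℝ → ℂ) t)
    (hc.mul (𝓕 ψ).continuous) one_lt_two ((𝓕 ψ).bounded_mul_isBigO_cocompact_rpow hb _)]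
  · simp [hz]
  · intro m hm
    rw [fourier_mul_fourier_eq_integral_compSubConstCLM]
    refine hf _ (disjoint_left.mpr fun x hx hxI => ?_)
    rw [ψ.tsupport_compSubConstCLM] at hx
    have hxm : |x - m| < 1 / 2 := hsmall _ hx
    have hm1 : (1 : ℝ) ≤ |(m : ℝ)| := by exact_mod_cast Int.one_le_abs hm
    have hx1 : |x| ≤ 1 / 2 := abs_le.mpr (hI hxI)
    have htri := abs_sub_abs_le_abs_sub (m : ℝ) x
    rw [abs_sub_comm] at htri
    linarith

theorem empty_of_disjoint (hfm : AEStronglyMeasurable f) (hb : ∀ t, ‖f t‖ ≤ M)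
    (hI : IsCompact I) (hJ : IsClosed J) (hIJ : Disjoint I J)
    (hfI : BandLimitedIn I f) (hfJ : BandLimitedIn J f) : BandLimitedIn ∅ f := by
  obtain ⟨χ, hχ, hχc, hχJ, hχI⟩ := exists_contDiff_hasCompactSupport_eventually_one hI hJ hIJ
  have hχt := hχc.hasTemperateGrowth hχ
  intro ψ _
  let ψ₁ := smulLeftCLM ℂ χ ψ
  have hψ₁ : Disjoint (tsupport ψ₁) J := by
    refine hχJ.mono_left ?_
    rw [smulLeftCLM_apply hχt]
    exact tsupport_smul_subset_left _ _
  have hψ₂ : Disjoint (tsupport (ψ - ψ₁)) I := by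
    refine disjoint_left.mpr fun x hx hxI => (notMem_tsupport_iff_eventuallyEq.mpr ?_) hx
    filter_upwards [eventually_nhdsSet_iff_forall.mp hχI x hxI] with y hy
    simp [ψ₁, smulLeftCLM_apply_apply hχt, hy]
  have hsplit : 𝓕 ψ = 𝓕 ψ₁ + 𝓕 (ψ - ψ₁) := by rw [← FourierAdd.fourier_add, add_sub_cancel]
  calc ∫ t, f t * 𝓕 (ψ : ℝ → ℂ) t
      = (∫ t, f t * 𝓕 (ψ₁ : ℝ → ℂ) t) + ∫ t, f t * 𝓕 ((ψ - ψ₁ : 𝓢(ℝ, ℂ)) : ℝ → ℂ) t := by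
        simp only [← SchwartzMap.fourier_coe, hsplit, IsAddApply.add_apply, mul_add]
        exact integral_add ((𝓕 ψ₁).integrable.bdd_mul hfm (ae_of_all _ hb))
          ((𝓕 (ψ - ψ₁)).integrable.bdd_mul hfm (ae_of_all _ hb))
    _ = 0 := by rw [hfJ ψ₁ hψ₁, hfI _ hψ₂, add_zero]

theorem eq_zero (hc : Continuous f) (hf : BandLimitedIn ∅ f) : f = 0 := by
  have hae : ∀ᵐ t, f t = 0 := by
    refine ae_eq_zero_of_integral_contDiff_smul_eq_zero hc.locallyIntegrable fun v hv hvc => ?_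
    let φ : 𝓢(ℝ, ℂ) :=
      (hvc.comp_left Complex.ofReal_zero).toSchwartzMap (Complex.ofRealCLM.contDiff.comp hv)
    rw [← hf (𝓕⁻ φ) (disjoint_empty _)]
    congr with t
    rw [← SchwartzMap.fourier_coe, FourierTransform.fourier_fourierInv_eq, Complex.real_smul,
      mul_comm]
    rfl
  exact (hc.ae_eq_iff_eq volume continuous_const).mp hae

theorem eq_zero_of_forall_int_eq_zero (hI : IsCompact I) (hI' : I ⊆ Ioo (-(1 / 2)) (1 / 2))
    (hc : Continuous f) (hb : ∀ t, ‖f t‖ ≤ M) (hf : BandLimitedIn I f)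
    (hz : ∀ n : ℤ, f n = 0) : f = 0 := by
  have hdisj : Disjoint I {x | 1 / 2 ≤ |x|} :=
    disjoint_left.mpr fun x hx (hx' : 1 / 2 ≤ |x|) => (abs_lt.mpr (hI' hx)).not_ge hx'
  exact eq_zero hc <| empty_of_disjoint hc.aestronglyMeasurable hb hI
    (isClosed_le continuous_const continuous_abs) hdisj hf
    (of_forall_int_eq_zero hc hb (hI'.trans Ioo_subset_Icc_self) hf hz)

end BandLimitedIn

theorem BernsteinR.injOn_restrictToZ {I : Set ℝ} (hI : IsCompact I)
    (hI' : I ⊆ Ioo (-(1 / 2)) (1 / 2)) : InjOn restrictToZ (BernsteinR I) := by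
  intro f hf g hg hfg
  have hcf : Continuous fun t => (f t : ℂ) := by fun_prop
  have hcg : Continuous fun t => (g t : ℂ) := by fun_prop
  have hbf : ∀ t, ‖(f t : ℂ)‖ ≤ 1 := fun t => by simpa using hf.1 t
  have hbg : ∀ t, ‖(g t : ℂ)‖ ≤ 1 := fun t => by simpa using hg.1 t
  have hdiff := BandLimitedIn.eq_zero_of_forall_int_eq_zero hI hI' (hcf.sub hcg)
    (fun t => (norm_sub_le _ _).trans (add_le_add (hbf t) (hbg t)))
    (hf.2.sub hcf.aestronglyMeasurable hbf hcg.aestronglyMeasurable hbg hg.2)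
    (fun n => by simp [show f n = g n from congrFun hfg n])
  ext t
  exact Complex.ofReal_injective (sub_eq_zero.mp (congrFun hdiff t))

theorem continuous_restrictToZ : Continuous restrictToZ :=
  continuous_pi fun _ => continuous_eval_const _

theorem restrictToZ_shiftR (f : C(ℝ, ℝ)) : restrictToZ (shiftR f) = fullShift (restrictToZ f) := by
  funext n
  change f (n + 1) = f ((n + 1 : ℤ) : ℝ)
  push_cast
  rfl

theorem restriction_embedding_Bernstein_general (a : ℝ) (ha1 : a < 1) :
    (∀ f ∈ BernsteinR (Icc (-(a / 2)) (a / 2)), ∀ n : ℤ,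
      restrictToZ f n ∈ Icc (-1 : ℝ) 1) ∧
    ContinuousOn restrictToZ (BernsteinR (Icc (-(a / 2)) (a / 2))) ∧
    Set.InjOn restrictToZ (BernsteinR (Icc (-(a / 2)) (a / 2))) ∧
    (∀ f : C(ℝ, ℝ), restrictToZ (shiftR f) = fullShift (restrictToZ f)) :=
  ⟨fun f hf n => abs_le.mp (hf.1 n), continuous_restrictToZ.continuousOn,
    BernsteinR.injOn_restrictToZ isCompact_Icc (Icc_subset_Ioo (by linarith) (by linarith)),
    restrictToZ_shiftR⟩

/-- For `0 ≤ a < 1`, the restriction map `H₁ : f ↦ (f(n))_{n∈ℤ}` maps `𝓑([-a/2, a/2])`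
into `[-1,1]^ℤ`, is continuous, injective on `𝓑([-a/2, a/2])` and intertwines the shift on
`𝓑([-a/2, a/2])` with the full shift; hence it is an equivariant topological embedding of
`(𝓑([-a/2, a/2]), σ)` into the full shift `([-1,1]^ℤ, σ)`. -/
theorem restriction_embedding_Bernstein (a : ℝ) (ha0 : 0 ≤ a) (ha1 : a < 1) :
    (∀ f ∈ BernsteinR (Icc (-(a / 2)) (a / 2)), ∀ n : ℤ,
      restrictToZ f n ∈ Icc (-1 : ℝ) 1) ∧
    ContinuousOn restrictToZ (BernsteinR (Icc (-(a / 2)) (a / 2))) ∧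
    Set.InjOn restrictToZ (BernsteinR (Icc (-(a / 2)) (a / 2))) ∧
    (∀ f : C(ℝ, ℝ), restrictToZ (shiftR f) = fullShift (restrictToZ f)) :=
  restriction_embedding_Bernstein_general a ha1

end
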